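/- arXiv:1205.2766 — 4 statements merged into one kernel-verified Lean document; each statement's English description precedes it below -/
import Mathlib

section
/- Let H be a finite simple undirected graph, let x, y be vertices of H, and let p ≠ q be two vertices that both lie on a common simple path from x to y in H. Form H' from H by adding an 'ear': a new path from p to q of length k ≥ 1 all of whose internal vertices are new vertices not in H (if k = 1 the ear is a new edge {p,q} not already in H). Then the number of simple xy-paths in H' is at least one more than the number of simple xy-paths in H. -/
open SimpleGraph

/-- The vertices of an ear with `m` internal (new) vertices attached at `p` and `q`:
`earVert p q m 0 = p`, `earVert p q m (m+1) = q`, and the `m` internal vertices are new. -/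
def earVert {V : Type*} (p q : V) (m : ℕ) : Fin (m + 2) → V ⊕ Fin m := fun i =>
  if h0 : (i : ℕ) = 0 then Sum.inl p
  else if hm : (i : ℕ) = m + 1 then Sum.inl q
  else Sum.inr ⟨(i : ℕ) - 1, by omega⟩

/-- The graph `H'` obtained from `H` by adding an ear from `p` to `q` of length `k = m + 1`
(`k` new edges), whose `m` internal vertices are new vertices not in `H`. -/
def addEar {V : Type*} (H : SimpleGraph V) (p q : V) (m : ℕ) : SimpleGraph (V ⊕ Fin m) :=
  SimpleGraph.fromRel (fun a b =>
    (∃ u v : V, a = Sum.inl u ∧ b = Sum.inl v ∧ H.Adj u v) ∨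
    (∃ i : Fin (m + 1), a = earVert p q m i.castSucc ∧ b = earVert p q m i.succ))

/-!
Sending `H` into `H'` by `Sum.inl` maps simple `xy`-paths injectively to simple `xy`-paths, none
of which uses an edge of the ear. Conversely, cut the common path `w` before the first of `p, q`
and after the second: the initial and final pieces are disjoint, and joining them through the ear
gives a simple `xy`-path of `H'` that does use an ear edge (for `k = 1` the edge `pq` is new by
assumption).
-/

namespace SimpleGraph

variable {V W : Type*} {G : SimpleGraph V} {G' : SimpleGraph W}

namespace Walk

theorem IsPath.append {u v w : V} {p : G.Walk u v} {q : G.Walk v w} (hp : p.IsPath)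
    (hq : q.IsPath) (hpq : ∀ z ∈ p.support, z ∈ q.support → z = v) : (p.append q).IsPath := by
  rw [isPath_def, support_append, List.nodup_append]
  refine ⟨hp.support_nodup, hq.support_nodup.tail, fun a ha b hb hab => ?_⟩
  subst hab
  have hqnd := hq.support_nodup
  rw [← cons_tail_support, List.nodup_cons] at hqnd
  exact hqnd.1 (hpq a ha (List.mem_of_mem_tail hb) ▸ hb)

theorem IsPath.exists_disjoint_of_mem_support {x y p q : V} {w : G.Walk x y} (hw : w.IsPath)
    (hp : p ∈ w.support) (hq : q ∈ w.support) (hpq : p ≠ q) :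
    (∃ (a : G.Walk x p) (b : G.Walk q y), a.IsPath ∧ b.IsPath ∧ a.support.Disjoint b.support) ∨
    (∃ (a : G.Walk x q) (b : G.Walk p y), a.IsPath ∧ b.IsPath ∧ a.support.Disjoint b.support) := by
  classical
  set a := w.takeUntil p hp
  set c := w.dropUntil p hp
  have hac : (a.append c).IsPath := by rwa [take_spec]
  have eq_p_of_mem {z : V} (hza : z ∈ a.support) (hzc : z ∈ c.support) : z = p := by
    by_contra hzp
    exact hac.ne_of_mem_support_of_append hzp hza hzc rfl
  by_cases hqc : q ∈ c.support
  · left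
    have hcb : ((c.takeUntil q hqc).append (c.dropUntil q hqc)).IsPath := by
      rw [take_spec]; exact hw.dropUntil hp
    refine ⟨a, c.dropUntil q hqc, hw.takeUntil hp, (hw.dropUntil hp).dropUntil hqc,
      fun z hza hzb => ?_⟩
    obtain rfl := eq_p_of_mem hza (c.support_dropUntil_subset_support hqc hzb)
    exact hcb.ne_of_mem_support_of_append hpq (start_mem_support _) hzb rfl
  · right
    have hqa : q ∈ a.support := by
      rw [← take_spec w hp, mem_support_append_iff] at hq
      exact hq.resolve_right hqc
    refine ⟨a.takeUntil q hqa, c, (hw.takeUntil hp).takeUntil hqa, hw.dropUntil hp,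
      fun z hza hzc => ?_⟩
    obtain rfl := eq_p_of_mem (a.support_takeUntil_subset_support hqa hza) hzc
    rw [takeUntil_takeUntil] at hza
    exact notMem_support_takeUntil_support_takeUntil_subset hpq.symm hp hqa hza

theorem IsPath.map_append_append_map {f : G →g G'} (hf : Function.Injective f) {x y p q : V}
    {a : G.Walk x p} {b : G.Walk q y} (ha : a.IsPath) (hb : b.IsPath)
    (hab : a.support.Disjoint b.support) {e : G'.Walk (f p) (f q)} (he : e.IsPath)
    (he_range : ∀ u, f u ∈ e.support → u = p ∨ u = q) :
    ((a.map f).append (e.append (b.map f))).IsPath := by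
  have hpa : p ∈ a.support := end_mem_support a
  have hqb : q ∈ b.support := start_mem_support b
  refine (ha.map hf).append ((he.append (hb.map hf) fun z hze hzb => ?_)) fun z hza hz => ?_
  · rw [support_map, List.mem_map] at hzb
    obtain ⟨u, hub, rfl⟩ := hzb
    obtain rfl | rfl := he_range u hze
    · exact (hab hpa hub).elim
    · rfl
  · rw [support_map, List.mem_map] at hza
    obtain ⟨u, hua, rfl⟩ := hza
    rw [mem_support_append_iff, support_map, List.mem_map] at hz
    obtain hze | ⟨u', hub, hu'⟩ := hz
    · obtain rfl | rfl := he_range u hze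
      · rfl
      · exact (hab hua hqb).elim
    · exact (hab hua (hf hu' ▸ hub)).elim

end Walk

namespace Path

theorem notMem_range_map_of_mem_edges {f : G →g G'} (hf : Function.Injective f) {x y : V}
    {P : G'.Path (f x) (f y)} {d : Sym2 W} (hd : d ∈ (P : G'.Walk (f x) (f y)).edges)
    (hdG : d ∉ Sym2.map f '' G.edgeSet) : P ∉ Set.range (Path.map f hf) := by
  rintro ⟨Q, rfl⟩
  rw [Path.map_coe, Walk.edges_map, List.mem_map] at hd
  obtain ⟨d', hd', rfl⟩ := hd
  exact hdG ⟨d', Walk.edges_subset_edgeSet _ hd', rfl⟩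

theorem card_lt_card_of_notMem_range [Finite W] {f : G →g G'} (hf : Function.Injective f)
    {x y : V} {P : G'.Path (f x) (f y)} (hP : P ∉ Set.range (Path.map f hf)) :
    Nat.card (G.Path x y) < Nat.card (G'.Path (f x) (f y)) := by
  classical
  have := Fintype.ofFinite W
  have : Finite (G.Path x y) := Finite.of_injective _ (map_injective hf x y)
  have := Fintype.ofFinite (G.Path x y)
  simp only [Nat.card_eq_fintype_card]
  exact Fintype.card_lt_of_injective_of_notMem _ (map_injective hf x y) hP

end Path

end SimpleGraph

section Ear

variable {V : Type*} {H : SimpleGraph V} {p q : V} {m : ℕ}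

@[simp] theorem earVert_zero : earVert p q m 0 = Sum.inl p := rfl

@[simp] theorem earVert_last : earVert p q m (Fin.last (m + 1)) = Sum.inl q := by
  simp [earVert]

theorem earVert_injective (hpq : p ≠ q) : Function.Injective (earVert p q m) := by
  intro i j hij
  unfold earVert at hij
  apply Fin.ext
  split_ifs at hij <;> simp_all; omega

theorem earVert_eq_inl {i : Fin (m + 2)} {u : V} (h : earVert p q m i = Sum.inl u) :
    (i : ℕ) = 0 ∧ u = p ∨ (i : ℕ) = m + 1 ∧ u = q := by
  unfold earVert at h
  split_ifs at h <;> simp_all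

theorem earVert_edge_notMem_image_edgeSet (hnew : m = 0 → ¬ H.Adj p q)
    {i j : Fin (m + 2)} (hij : (pathGraph (m + 2)).Adj i j) :
    s(earVert p q m i, earVert p q m j) ∉ Sym2.map Sum.inl '' H.edgeSet := by
  rintro ⟨d, hd, hdij⟩
  induction d using Sym2.ind with | _ u v => ?_
  rw [mem_edgeSet] at hd
  rw [Sym2.map_mk, Sym2.eq_iff] at hdij
  rw [pathGraph_adj] at hij
  -- both ends of an ear edge lie in `H` only if `m = 0` and the edge is `pq`
  rcases hdij with ⟨hu, hv⟩ | ⟨hu, hv⟩ <;>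
  obtain ⟨hi, rfl⟩ | ⟨hi, rfl⟩ := earVert_eq_inl hu.symm <;>
  obtain ⟨hj, rfl⟩ | ⟨hj, rfl⟩ := earVert_eq_inl hv.symm
  all_goals first | omega | exact hnew (by omega) hd | exact hnew (by omega) hd.symm

namespace addEar

variable (H p q m) in
@[simps]
def inlHom : H →g addEar H p q m where
  toFun := Sum.inl
  map_rel' {u v} h := by
    rw [addEar, fromRel_adj]
    exact ⟨by simp [h.ne], Or.inl (Or.inl ⟨u, v, rfl, rfl, h⟩)⟩

variable (H) in
@[simps]
def earHom (hpq : p ≠ q) : pathGraph (m + 2) →g addEar H p q m where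
  toFun := earVert p q m
  map_rel' {i j} h := by
    rw [addEar, fromRel_adj]
    refine ⟨(earVert_injective hpq).ne h.ne, ?_⟩
    rw [pathGraph_adj] at h
    obtain h | h := h
    · exact Or.inl (Or.inr ⟨⟨i, by omega⟩, rfl, congrArg _ (Fin.ext (by simp; omega))⟩)
    · exact Or.inr (Or.inr ⟨⟨j, by omega⟩, rfl, congrArg _ (Fin.ext (by simp; omega))⟩)

theorem exists_isPath_ear (hpq : p ≠ q) (hnew : m = 0 → ¬ H.Adj p q) :
    ∃ e : (addEar H p q m).Walk (inlHom H p q m p) (inlHom H p q m q), e.IsPath ∧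
      (∀ u, inlHom H p q m u ∈ e.support → u = p ∨ u = q) ∧
      ∃ d ∈ e.edges, d ∉ Sym2.map (inlHom H p q m) '' H.edgeSet := by
  obtain ⟨c, hc⟩ := (pathGraph_preconnected (m + 2)).exists_isPath 0 (Fin.last (m + 1))
  have hc_nil : ¬ c.Nil := Walk.not_nil_of_ne (by simp [Fin.ext_iff])
  refine ⟨(c.map (earHom H hpq)).copy (by simp) (by simp), ?_, fun u hu => ?_, _, ?_,
    earVert_edge_notMem_image_edgeSet hnew (c.adj_snd hc_nil)⟩
  · rw [Walk.isPath_copy]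
    exact hc.map (earVert_injective hpq)
  · rw [Walk.support_copy, Walk.support_map, List.mem_map] at hu
    obtain ⟨i, -, hi⟩ := hu
    obtain ⟨-, rfl⟩ | ⟨-, rfl⟩ := earVert_eq_inl hi <;> simp
  · rw [Walk.edges_copy, Walk.edges_map]
    exact List.mem_map_of_mem (Walk.mk_start_snd_mem_edges hc_nil)

theorem exists_path_notMem_range_inlHom (hpq : p ≠ q) (hnew : m = 0 → ¬ H.Adj p q) {x y : V}
    {w : H.Walk x y} (hw : w.IsPath) (hp : p ∈ w.support) (hq : q ∈ w.support) :
    ∃ P : (addEar H p q m).Path (Sum.inl x) (Sum.inl y),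
      P ∉ Set.range (SimpleGraph.Path.map (inlHom H p q m) Sum.inl_injective) := by
  obtain ⟨e, he, he_range, d, hd, hdH⟩ := exists_isPath_ear hpq hnew
  rcases hw.exists_disjoint_of_mem_support hp hq hpq with ⟨a, b, ha, hb, hab⟩ | ⟨a, b, ha, hb, hab⟩
  · refine ⟨⟨_, ha.map_append_append_map (f := inlHom H p q m) Sum.inl_injective hb hab
      he he_range⟩, Path.notMem_range_map_of_mem_edges _ (d := d) ?_ hdH⟩
    simp only [Walk.edges_append, List.mem_append]
    exact Or.inr (Or.inl hd)
  · refine ⟨⟨_, ha.map_append_append_map (f := inlHom H p q m) Sum.inl_injective hb hab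
      he.reverse fun u hu => ?_⟩, Path.notMem_range_map_of_mem_edges _ (d := d) ?_ hdH⟩
    · rw [Walk.support_reverse, List.mem_reverse] at hu
      exact (he_range u hu).symm
    · simp only [Walk.edges_append, Walk.edges_reverse, List.mem_append, List.mem_reverse]
      exact Or.inr (Or.inl hd)

end addEar

end Ear

theorem addEar_increases_num_paths_general
    {V : Type*} [Fintype V] (H : SimpleGraph V)
    (x y p q : V) (hpq : p ≠ q) (m : ℕ)
    (hnew : m = 0 → ¬ H.Adj p q)
    (hcommon : ∃ w : H.Walk x y, w.IsPath ∧ p ∈ w.support ∧ q ∈ w.support) :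
    Nat.card (H.Path x y) + 1 ≤
      Nat.card ((addEar H p q m).Path (Sum.inl x) (Sum.inl y)) := by
  obtain ⟨w, hw, hp, hq⟩ := hcommon
  obtain ⟨P, hP⟩ := addEar.exists_path_notMem_range_inlHom hpq hnew hw hp hq
  exact Path.card_lt_card_of_notMem_range _ hP

/-- Let `p ≠ q` be two vertices lying on a common simple `xy`-path of a
finite simple graph `H`. Adding an ear from `p` to `q` of length `k = m + 1 ≥ 1`
(with `m` new internal vertices; if `k = 1`, i.e. `m = 0`, the ear is a new edge `{p,q}`
not already in `H`) increases the number of simple `xy`-paths by at least one. -/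
theorem addEar_increases_num_paths
    {V : Type*} [Fintype V] [DecidableEq V] (H : SimpleGraph V)
    (x y p q : V) (hpq : p ≠ q) (m : ℕ)
    (hnew : m = 0 → ¬ H.Adj p q)
    (hcommon : ∃ w : H.Walk x y, w.IsPath ∧ p ∈ w.support ∧ q ∈ w.support) :
    Nat.card (H.Path x y) + 1 ≤
      Nat.card ((addEar H p q m).Path (Sum.inl x) (Sum.inl y)) :=
  addEar_increases_num_paths_general H x y p q hpq m hnew hcommon
end

section
/- Let G be a finite simple undirected graph and let b = {s, t} be an edge of G. The map sending a simple cycle c of G that contains the edge b to the path obtained by removing b from c is a bijection between the set of simple cycles of G containing b and the set of simple paths from s to t in the graph G − b. -/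
/-!
A path of `G - b` from `s` to `t` closes up with `b` into a cycle of `G`. Conversely, the only edges
of a cycle at `t` are its first and last one, so after possibly reversing it the cycle is `b`
followed by a path from `s` to `t` avoiding `b`. Injectivity holds because a path is determined by
its edge set: the first edge of a path is the only one at its start vertex.
-/

open SimpleGraph

namespace SimpleGraph.Walk

variable {V : Type*} {G : SimpleGraph V}

lemma notMem_edges_of_deleteEdges {s : Set (Sym2 V)} {e : Sym2 V} {u v : V}
    (p : (G.deleteEdges s).Walk u v) (he : e ∈ s) : e ∉ p.edges := fun hp ↦
  (edgeSet_deleteEdges s ▸ p.edges_subset_edgeSet hp).2 he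

lemma IsPath.exists_eq_cons_of_mem_edges {u v w : V} {p : G.Walk u v} (hp : p.IsPath)
    (he : s(u, w) ∈ p.edges) : ∃ (h : G.Adj u w) (q : G.Walk w v), p = cons h q := by
  cases p with
  | nil => simp at he
  | cons h q =>
    rw [edges_cons, List.mem_cons] at he
    rcases he with he | he
    · obtain rfl := Sym2.congr_right.mp he.symm
      exact ⟨h, q, rfl⟩
    · exact absurd (q.fst_mem_support_of_mem_edges he) ((cons_isPath_iff h q).mp hp).2

lemma IsPath.eq_of_edgeSet_eq {u v : V} {p q : G.Walk u v} (hp : p.IsPath) (hq : q.IsPath)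
    (hpq : p.edgeSet = q.edgeSet) : p = q := by
  induction p with
  | nil =>
    cases q with
    | nil => rfl
    | cons h q =>
      rw [edgeSet_nil, edgeSet_cons] at hpq
      exact absurd hpq.symm (Set.insert_nonempty _ _).ne_empty
  | @cons u w v h p ih =>
    have hq_uw : s(u, w) ∈ q.edges := by simp [← mem_edgeSet, ← hpq, edgeSet_cons]
    obtain ⟨h', q, rfl⟩ := hq.exists_eq_cons_of_mem_edges hq_uw
    rw [cons_isPath_iff] at hp hq
    have notMem {r : G.Walk w v} (hr : u ∉ r.support) : s(u, w) ∉ r.edgeSet :=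
      fun he ↦ hr (r.fst_mem_support_of_mem_edges he)
    rw [edgeSet_cons, edgeSet_cons] at hpq
    rw [ih hp.1 hq.1 (by simpa [notMem hp.2, notMem hq.2] using congrArg (· \ {s(u, w)}) hpq)]

lemma IsCycle.exists_cons_eq_of_mem_edges {u w : V} {c : G.Walk u u} (hc : c.IsCycle)
    (he : s(u, w) ∈ c.edges) :
    ∃ (h : G.Adj u w) (q : G.Walk w u), cons h q = c ∨ cons h q = c.reverse := by
  cases c with
  | nil => simp at he
  | @cons _ v _ h q =>
    obtain ⟨hq, -⟩ := (cons_isCycle_iff q h).mp hc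
    rw [edges_cons, List.mem_cons] at he
    rcases he with he | he
    · obtain rfl := Sym2.congr_right.mp he
      exact ⟨h, q, .inl rfl⟩
    · -- then `s(u, w)` is the last edge of `c`
      obtain ⟨h', r, hr⟩ := hq.reverse.exists_eq_cons_of_mem_edges (by simpa using he)
      exact ⟨h', r.concat h.symm, .inr (by rw [reverse_cons, hr]; rfl)⟩

lemma IsCycle.exists_isPath_edgeSet_eq_insert {u w : V} {c : G.Walk u u} (hc : c.IsCycle)
    (he : s(u, w) ∈ c.edges) :
    ∃ q : G.Walk w u, q.IsPath ∧ s(u, w) ∉ q.edges ∧ c.edgeSet = insert s(u, w) q.edgeSet := by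
  obtain ⟨h, q, hcq⟩ := hc.exists_cons_eq_of_mem_edges he
  have hcq' : (cons h q).IsCycle ∧ (cons h q).edgeSet = c.edgeSet := by
    rcases hcq with hcq | hcq <;> rw [hcq] <;> simp [hc, edgeSet_reverse]
  obtain ⟨hq, huw⟩ := (cons_isCycle_iff q h).mp hcq'.1
  exact ⟨q, hq, huw, by rw [← hcq'.2, edgeSet_cons]⟩

end SimpleGraph.Walk

open Walk in
theorem cycles_through_edge_biject_with_paths_general
    {V : Type*} [DecidableEq V] (G : SimpleGraph V)
    {s t : V} (hb : G.Adj s t) :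
    Set.BijOn (fun p : (G.deleteEdges {s(s,t)}).Walk s t => insert s(s,t) p.edges.toFinset)
      {p : (G.deleteEdges {s(s,t)}).Walk s t | p.IsPath}
      {S : Finset (Sym2 V) | ∃ c : G.Walk t t, c.IsCycle ∧ c.edges.toFinset = S ∧
        s(s,t) ∈ c.edges} := by
  have hts : s(t, s) = s(s, t) := Sym2.eq_swap
  have hb_notMem (p : (G.deleteEdges {s(s,t)}).Walk s t) : s(s,t) ∉ p.edges :=
    p.notMem_edges_of_deleteEdges rfl
  refine ⟨fun p hp ↦ ?_, fun p hp q hq hpq ↦ ?_, ?_⟩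
  · refine ⟨cons hb.symm (p.mapLe (G.deleteEdges_le _)), ?_, ?_, by simp⟩
    · refine (cons_isCycle_iff _ _).mpr ⟨hp.mapLe _, ?_⟩
      rw [edges_mapLe_eq_edges, hts]
      exact hb_notMem p
    · simp [Sym2.eq_swap]
  · simp only at hpq
    apply hp.eq_of_edgeSet_eq hq
    rw [← coe_edges_toFinset, ← coe_edges_toFinset,
      ← Finset.erase_insert (List.mem_toFinset.not.mpr (hb_notMem p)), hpq,
      Finset.erase_insert (List.mem_toFinset.not.mpr (hb_notMem q))]
  · rintro S ⟨c, hc, rfl, hbc⟩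
    obtain ⟨q, hq, hbq, hcq⟩ := hc.exists_isPath_edgeSet_eq_insert (hts ▸ hbc)
    have hq_avoids : ∀ e ∈ q.edges, e ∉ ({s(s,t)} : Set (Sym2 V)) := by
      rintro e he rfl
      exact hbq (hts ▸ he)
    refine ⟨q.toDeleteEdges _ hq_avoids, hq.toDeleteEdges G _ hq_avoids, ?_⟩
    apply Finset.coe_injective
    rw [Finset.coe_insert, coe_edges_toFinset, coe_edges_toFinset, hcq, hts]
    exact congrArg _ (edgeSet_transfer _ _)

/-- Let `b = {s,t}` be an edge of `G`. Identifying a simple cycle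
(up to rotation and reflection) with its edge set, the map sending a simple `st`-path
`p` of `G − b` to the cycle obtained by adding back `b` (i.e. with edge set
`insert b p.edges`) is a bijection between the simple `st`-paths of `G − b` and the
simple cycles of `G` containing the edge `b`. -/
theorem cycles_through_edge_biject_with_paths
    {V : Type*} [Fintype V] [DecidableEq V] (G : SimpleGraph V)
    {s t : V} (hb : G.Adj s t) :
    Set.BijOn (fun p : (G.deleteEdges {s(s,t)}).Walk s t => insert s(s,t) p.edges.toFinset)
      {p : (G.deleteEdges {s(s,t)}).Walk s t | p.IsPath}
      {S : Finset (Sym2 V) | ∃ c : G.Walk t t, c.IsCycle ∧ c.edges.toFinset = S ∧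
        s(s,t) ∈ c.edges} :=
  cycles_through_edge_biject_with_paths_general G hb
end

section
/- Let B be a biconnected (2-connected) finite simple undirected graph, let b = {s, t} be an edge of B, and let e be any edge of B with e ≠ b. Then there exists a simple cycle of B containing both edges b and e; equivalently, e lies on some simple path from s to t in the graph B − b. -/
open SimpleGraph

/-!
Every vertex `x` lies on some `s`–`t` path: follow a walk from `x` to `t` backwards, extending
the path one edge at a time. To extend an `s`–`t` path `P` through `x` by an edge `xy`, use that
`B - x` is connected to walk from `y` to an endpoint of `P` other than `x`, stop at the first
vertex `w` on `P`, and replace the segment of `P` between `x` and `w` by the ear `x, y, …, w`.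
The path obtained for `e = xy` is not the one-edge path `st`, hence avoids `st`, and closes up
with `st` to a cycle.
-/

namespace SimpleGraph.Walk

variable {V : Type*} {G : SimpleGraph V} {s t u v w x y z : V}

theorem isPath_append_iff {p : G.Walk u v} {q : G.Walk v w} :
    (p.append q).IsPath ↔ p.IsPath ∧ q.IsPath ∧ ∀ x ∈ p.support, x ∈ q.support → x = v := by
  refine ⟨fun h ↦ ⟨h.of_append_left, h.of_append_right, fun x hp hq ↦ ?_⟩, ?_⟩
  · by_contra hxv
    exact h.ne_of_mem_support_of_append hxv hp hq rfl
  · rintro ⟨hp, hq, hpq⟩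
    rw [isPath_def, support_append]
    refine hp.support_nodup.append (hq.support_nodup.sublist (List.tail_sublist _)) ?_
    intro x hxp hxq
    have hq' := hq.support_nodup
    rw [← q.cons_tail_support, List.nodup_cons] at hq'
    exact hq'.1 (hpq x hxp (List.mem_of_mem_tail hxq) ▸ hxq)

theorem exists_eq_append_append_of_mem_support (p : G.Walk s t) (hx : x ∈ p.support)
    (hw : w ∈ p.support) :
    (∃ (a : G.Walk s x) (m : G.Walk x w) (c : G.Walk w t), p = a.append (m.append c)) ∨
      ∃ (a : G.Walk s w) (m : G.Walk w x) (c : G.Walk x t), p = a.append (m.append c) := by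
  obtain ⟨a, r, rfl⟩ := p.mem_support_iff_exists_append.mp hx
  rcases (mem_support_append_iff _ _).mp hw with hwa | hwr
  · obtain ⟨a', m, rfl⟩ := a.mem_support_iff_exists_append.mp hwa
    exact .inr ⟨a', m, r, (append_assoc _ _ _).symm⟩
  · obtain ⟨m, c, rfl⟩ := r.mem_support_iff_exists_append.mp hwr
    exact .inl ⟨a, m, c, rfl⟩

theorem IsPath.replace_middle {a : G.Walk s u} {m R : G.Walk u v} {c : G.Walk v t}
    (h : (a.append (m.append c)).IsPath) (hR : R.IsPath)
    (hRm : ∀ z ∈ R.support, z ∈ (a.append (m.append c)).support → z = u ∨ z = v) :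
    (a.append (R.append c)).IsPath := by
  simp only [isPath_append_iff, mem_support_append_iff] at h hRm ⊢
  have hu := m.start_mem_support
  have hv := m.end_mem_support
  grind

theorem IsPath.exists_reroute {p : G.Walk s t} (hp : p.IsPath) (hx : x ∈ p.support)
    (hw : w ∈ p.support) {R : G.Walk x w} (hR : R.IsPath)
    (hRp : ∀ z ∈ R.support, z ∈ p.support → z = x ∨ z = w) :
    ∃ q : G.Walk s t, q.IsPath ∧ R.edges ⊆ q.edges := by
  rcases p.exists_eq_append_append_of_mem_support hx hw with ⟨a, m, c, rfl⟩ | ⟨a, m, c, rfl⟩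
  · exact ⟨_, hp.replace_middle hR hRp, by simp⟩
  · refine ⟨_, hp.replace_middle (R := R.reverse) hR.reverse fun z hz hzp ↦ ?_, by simp⟩
    rw [support_reverse, List.mem_reverse] at hz
    exact (hRp z hz hzp).symm

theorem IsPath.exists_isPath_mem_edges_of_adj {p : G.Walk s t} (hp : p.IsPath)
    (hx : x ∈ p.support) (hxy : G.Adj x y) (W : G.Walk y z) (hz : z ∈ p.support)
    (hxW : x ∉ W.support) : ∃ q : G.Walk s t, q.IsPath ∧ s(x, y) ∈ q.edges := by
  classical
  obtain ⟨w, hwp, hwW, hfirst⟩ := W.bypass.exists_mem_support_forall_mem_support_imp_eq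
    p.support.toFinset ⟨z, by simpa using hz⟩
  set W' := W.bypass.takeUntil w hwW
  have hxW' : x ∉ W'.support := fun h ↦
    hxW (W.support_bypass_subset_support (W.bypass.support_takeUntil_subset_support hwW h))
  obtain ⟨q, hq, hRq⟩ := hp.exists_reroute hx (by simpa using hwp)
    ((cons_isPath_iff hxy W').mpr ⟨W.bypass_isPath.takeUntil hwW, hxW'⟩) fun v hv hvp ↦ by
      rw [support_cons, List.mem_cons] at hv
      exact hv.imp id fun hv ↦ hfirst v (by simpa using hvp) hv
  exact ⟨q, hq, hRq (by simp)⟩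

end SimpleGraph.Walk

namespace SimpleGraph

variable {V : Type*} {B : SimpleGraph V} {s t x y : V}

theorem exists_walk_avoiding {v a b : V} (hv : (B.induce {x | x ≠ v}).Connected) (ha : a ≠ v)
    (hb : b ≠ v) : ∃ W : B.Walk a b, v ∉ W.support := by
  obtain ⟨W⟩ := hv ⟨a, ha⟩ ⟨b, hb⟩
  refine ⟨W.map (Embedding.induce _).toHom, fun hv' ↦ ?_⟩
  obtain ⟨⟨u, hu⟩, -, h⟩ := List.mem_map.mp (W.support_map _ ▸ hv')
  exact hu h

theorem exists_isPath_mem_edges_of_adj (hB : ∀ v, (B.induce {x | x ≠ v}).Connected)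
    (hst : s ≠ t) {p : B.Walk s t} (hp : p.IsPath) (hx : x ∈ p.support) (hxy : B.Adj x y) :
    ∃ q : B.Walk s t, q.IsPath ∧ s(x, y) ∈ q.edges := by
  obtain ⟨z, hz, hzx⟩ : ∃ z ∈ p.support, z ≠ x := by
    by_cases hxt : x = t
    · exact ⟨s, p.start_mem_support, hxt ▸ hst⟩
    · exact ⟨t, p.end_mem_support, Ne.symm hxt⟩
  obtain ⟨W, hW⟩ := exists_walk_avoiding (hB x) hxy.ne' hzx
  exact hp.exists_isPath_mem_edges_of_adj hx hxy W hz hW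

theorem exists_isPath_mem_support (hconn : B.Connected)
    (hB : ∀ v, (B.induce {x | x ≠ v}).Connected) (hadj : B.Adj s t) (x : V) :
    ∃ p : B.Walk s t, p.IsPath ∧ x ∈ p.support := by
  obtain ⟨W⟩ := hconn x t
  induction W with
  | nil => exact ⟨hadj.toWalk, hadj.isPath_toWalk, by simp⟩
  | cons hxx' _ ih =>
    obtain ⟨p, hp, hx'⟩ := ih hadj
    obtain ⟨q, hq, hq'⟩ := exists_isPath_mem_edges_of_adj hB hadj.ne hp hx' hxx'.symm
    exact ⟨q, hq, q.snd_mem_support_of_mem_edges hq'⟩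

end SimpleGraph

theorem exists_cycle_through_two_edges_general
    {V : Type*} (B : SimpleGraph V)
    (hconn : B.Connected)
    (hnocut : ∀ v : V, (B.induce {x | x ≠ v}).Connected)
    {s t : V} (hb : B.Adj s t) {e : Sym2 V} (he : e ∈ B.edgeSet) (hne : e ≠ s(s,t)) :
    (∃ (u : V) (c : B.Walk u u), c.IsCycle ∧ s(s,t) ∈ c.edges ∧ e ∈ c.edges) ∧
    (∃ p : (B.deleteEdges {s(s,t)}).Walk s t, p.IsPath ∧ e ∈ p.edges) := by
  induction e using Sym2.ind with | _ x y
  obtain ⟨p, hp, hx⟩ := exists_isPath_mem_support hconn hnocut hb x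
  obtain ⟨q, hq, hxy⟩ := exists_isPath_mem_edges_of_adj hnocut hb.ne hp hx he
  -- a path from `s` to `t` through the edge `s(s, t)` is that edge alone
  have hst : s(s, t) ∉ q.edges := fun h ↦
    hne (by simpa [hq.eq_adj_toWalk_of_mem_edges h] using hxy)
  refine ⟨⟨t, .cons hb.symm q, ?_, by simp, by simp [hxy]⟩,
    ⟨q.toDeleteEdge _ hst, hq.transfer _, by simpa using hxy⟩⟩
  exact (Walk.cons_isCycle_iff q hb.symm).mpr ⟨hq, by rwa [Sym2.eq_swap]⟩

/-- In a biconnected (2-connected) finite simple graph `B` with an edge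
`b = {s,t}`, every edge `e ≠ b` lies on a simple cycle together with `b`; equivalently,
`e` lies on some simple `st`-path of the graph `B − b`. -/
theorem exists_cycle_through_two_edges
    {V : Type*} [Fintype V] (B : SimpleGraph V)
    (hconn : B.Connected) (hcard : 3 ≤ Fintype.card V)
    (hnocut : ∀ v : V, (B.induce {x | x ≠ v}).Connected)
    {s t : V} (hb : B.Adj s t) {e : Sym2 V} (he : e ∈ B.edgeSet) (hne : e ≠ s(s,t)) :
    (∃ (u : V) (c : B.Walk u u), c.IsCycle ∧ s(s,t) ∈ c.edges ∧ e ∈ c.edges) ∧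
    (∃ p : (B.deleteEdges {s(s,t)}).Walk s t, p.IsPath ∧ e ∈ p.edges) :=
  exists_cycle_through_two_edges_general B hconn hnocut hb he hne
end

section
/- Let G be a finite simple undirected graph, let π be a simple path from s to t in G, and let w be a vertex lying on π. Then for every vertex a with a ≠ w, the vertex w lies in the same connected component of G − a as s, or in the same connected component of G − a as t (or both). -/
/-!
Split the path at `w` into the segment from `s` to `w` and the segment from `w` to `t`.
The path visits each vertex once, so the two segments share only `w`; hence a vertex `a ≠ w`
misses one of them, and that segment connects `w` to its endpoint inside `G − a`.
-/

open SimpleGraph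

namespace SimpleGraph.Walk

variable {V : Type*} {G : SimpleGraph V} {u v w x : V}

lemma IsPath.eq_of_mem_support_takeUntil_of_mem_support_dropUntil [DecidableEq V]
    {p : G.Walk u v} (hp : p.IsPath) (hw : w ∈ p.support)
    (hx₁ : x ∈ (p.takeUntil w hw).support) (hx₂ : x ∈ (p.dropUntil w hw).support) : x = w := by
  rw [← cons_tail_support] at hx₂
  refine (List.mem_cons.mp hx₂).resolve_right fun hx_tail => ?_
  have hnodup := hp.support_nodup
  rw [← p.take_spec hw, support_append, List.nodup_append] at hnodup
  exact hnodup.2.2 x hx₁ x hx_tail rfl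

lemma reachable_induce_compl_singleton_of_notMem_support {a : V} (q : G.Walk u v)
    (ha : a ∉ q.support) (hu : u ≠ a) (hv : v ≠ a) :
    (G.induce {x | x ≠ a}).Reachable ⟨u, hu⟩ ⟨v, hv⟩ :=
  ⟨q.induce _ fun _ hx (hxa : _ = a) => ha (hxa ▸ hx)⟩

end SimpleGraph.Walk

theorem vertex_on_path_reaches_endpoint_avoiding_vertex_general
    {V : Type*} (G : SimpleGraph V) {s t : V}
    (p : G.Walk s t) (hp : p.IsPath) {w : V} (hw : w ∈ p.support) :
    ∀ (a : V) (haw : a ≠ w),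
      (∃ hs : s ≠ a, (G.induce {x | x ≠ a}).Reachable ⟨w, haw.symm⟩ ⟨s, hs⟩) ∨
      (∃ ht : t ≠ a, (G.induce {x | x ≠ a}).Reachable ⟨w, haw.symm⟩ ⟨t, ht⟩) := by
  classical
  intro a haw
  set q := p.takeUntil w hw
  set r := p.dropUntil w hw
  by_cases haq : a ∈ q.support
  · have har : a ∉ r.support := fun har =>
      haw (hp.eq_of_mem_support_takeUntil_of_mem_support_dropUntil hw haq har)
    have ht : t ≠ a := fun hta => har (hta ▸ r.end_mem_support)
    exact .inr ⟨ht, r.reachable_induce_compl_singleton_of_notMem_support har haw.symm ht⟩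
  · have hs : s ≠ a := fun hsa => haq (hsa ▸ q.start_mem_support)
    exact .inl ⟨hs, (q.reachable_induce_compl_singleton_of_notMem_support haq hs haw.symm).symm⟩

/-- Let `π` be a simple path from `s` to `t` in a finite simple graph
`G` and let `w` be a vertex lying on `π`. Then for every vertex `a ≠ w`, the vertex `w`
lies in the same connected component of `G − a` as `s`, or in the same connected
component of `G − a` as `t` (or both). -/
theorem vertex_on_path_reaches_endpoint_avoiding_vertex
    {V : Type*} [Fintype V] (G : SimpleGraph V) {s t : V}
    (p : G.Walk s t) (hp : p.IsPath) {w : V} (hw : w ∈ p.support) :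
    ∀ (a : V) (haw : a ≠ w),
      (∃ hs : s ≠ a, (G.induce {x | x ≠ a}).Reachable ⟨w, haw.symm⟩ ⟨s, hs⟩) ∨
      (∃ ht : t ≠ a, (G.induce {x | x ≠ a}).Reachable ⟨w, haw.symm⟩ ⟨t, ht⟩) :=
  vertex_on_path_reaches_endpoint_avoiding_vertex_general G p hp hw
end
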